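/- arXiv:2508.19392 — 3 statements merged into one kernel-verified Lean document; each statement's English description precedes it below -/
import Mathlib

section
/- Let g : ℕ^p → ℤ and h : ℕ × ℕ^p → ℤ, and let f be the solution of the length-ODE f(0, y) = g(y), f(x+1, y) = f(x, y) + (ℓ(x+1) - ℓ(x))·h(x, y). Then for all x and y, f(x, y) = g(y) + ∑_{u=0}^{ℓ(x)-1} h(2^u - 1, y). -/
def ell (x : ℕ) : ℕ := Nat.clog 2 (x + 1)

lemma ell_step (x : ℕ) :
    ell (x + 1) = ell x ∨ (ell (x + 1) = ell x + 1 ∧ x = 2 ^ ell x - 1) := by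
  have h1 : (1 : ℕ) < 2 := one_lt_two
  have hx : x + 1 ≤ 2 ^ ell x := (Nat.clog_le_iff_le_pow h1).1 le_rfl
  by_cases hc : x + 2 ≤ 2 ^ ell x
  · left
    have h2 : ell (x + 1) ≤ ell x := (Nat.clog_le_iff_le_pow h1).2 hc
    have h3 : ell x ≤ ell (x + 1) := Nat.clog_mono_right 2 (by omega)
    omega
  · right
    have hxe : x + 1 = 2 ^ ell x := by omega
    constructor
    · have h2 : ell (x + 1) ≤ ell x + 1 := by
        apply (Nat.clog_le_iff_le_pow h1).2
        have : 1 ≤ 2 ^ ell x := Nat.one_le_two_pow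
        calc x + 1 + 1 = 2 ^ ell x + 1 := by omega
          _ ≤ 2 ^ ell x + 2 ^ ell x := by omega
          _ = 2 ^ (ell x + 1) := by ring
      have h3 : ¬ ell (x + 1) ≤ ell x := by
        intro hle
        exact hc ((Nat.clog_le_iff_le_pow h1).1 hle)
      omega
    · omega

theorem length_ODE_sum_solution (p : ℕ) (g : (Fin p → ℕ) → ℤ)
    (h : ℕ → (Fin p → ℕ) → ℤ) (f : ℕ → (Fin p → ℕ) → ℤ)
    (h0 : ∀ y, f 0 y = g y)
    (hrec : ∀ x y, f (x + 1) y = f x y + ((ell (x + 1) : ℤ) - ell x) * h x y) :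
    ∀ x y, f x y = g y + ∑ u ∈ Finset.range (ell x), h (2 ^ u - 1) y := by
  intro x
  induction x with
  | zero =>
    intro y
    have : ell 0 = 0 := by simp [ell]
    simp [this, h0 y]
  | succ n ih =>
    intro y
    rw [hrec n y, ih y]
    rcases ell_step n with heq | ⟨heq, hn⟩
    · rw [heq]; ring
    · rw [heq, Finset.sum_range_succ, ← hn]
      push_cast
      ring
end

section
/- Fix k : ℕ. The function f : ℕ → ℕ defined by f(0) = 1 and f(x+1) = f(x) + (ℓ(x+1) - ℓ(x))·(2^{ℓ(k)} - 1)·f(x) satisfies f(x) = 2^{ℓ(k)·ℓ(x)} for all x. In particular the smash function x # y = 2^{ℓ(x)·ℓ(y)} is definable by this schema (with k = y). -/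
/-- The ℓ-ODE₂ schema with `h = 0` computes the smash function `2^{ℓ(k)·ℓ(x)}`. -/
theorem smash_via_ODE2 (k : ℕ) (f : ℕ → ℕ) (h0 : f 0 = 1)
    (hrec : ∀ x, f (x + 1) = f x + (ell (x + 1) - ell x) * ((2 ^ ell k - 1) * f x)) :
    ∀ x, f x = 2 ^ (ell k * ell x) := by
  intro x
  induction x with
  | zero => simp [h0, ell]
  | succ n ih =>
    have h1 : ell n ≤ ell (n + 1) := Nat.clog_mono_right _ (by omega)
    have h2 : ell (n + 1) ≤ ell n + 1 := by
      unfold ell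
      rw [Nat.clog_le_iff_le_pow one_lt_two]
      have := Nat.le_pow_clog one_lt_two (n + 1)
      rw [pow_succ]
      omega
    rw [hrec, ih]
    by_cases h : ell (n + 1) = ell n
    · rw [h]
      simp
    · have he : ell (n + 1) = ell n + 1 := by omega
      rw [he, mul_add, mul_one, pow_add]
      have hA : 1 ≤ 2 ^ ell k := Nat.one_le_two_pow
      have hB : 2 ^ (ell k * ell n) ≤ 2 ^ ell k * 2 ^ (ell k * ell n) :=
        Nat.le_mul_of_pos_left _ (by positivity)
      have hd : ell n + 1 - ell n = 1 := by omega
      rw [hd, one_mul, Nat.sub_one_mul, mul_comm (2 ^ ell k)]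
      have hC : 2 ^ (ell k * ell n) ≤ 2 ^ (ell k * ell n) * 2 ^ ell k :=
        Nat.le_mul_of_pos_right _ (by positivity)
      omega
end

section
/- Fix y : ℕ. The function f : ℕ → ℕ defined by f(0) = y and f(x+1) = f(x) - (ℓ(x+1) - ℓ(x))·⌈f(x)/2⌉ satisfies f(x) = ⌊y / 2^{ℓ(x)}⌋ for all x, where ⌈z/2⌉ means z - ⌊z/2⌋. -/
lemma ell_le_ell_succ (x : ℕ) : ell x ≤ ell (x + 1) :=
  Nat.clog_mono_right 2 (by omega)

lemma ell_succ_le_succ_ell (x : ℕ) : ell (x + 1) ≤ ell x + 1 := by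
  unfold ell
  rw [Nat.clog_of_two_le (by norm_num) (by omega)]
  exact Nat.add_le_add_right (Nat.clog_mono_right 2 (by omega)) 1

lemma div_two_pow_sub_mul_ceil_half (y e d : ℕ) (hd : d ≤ 1) :
    y / 2 ^ e - d * (y / 2 ^ e - y / 2 ^ e / 2) = y / 2 ^ (e + d) := by
  rcases Nat.le_one_iff_eq_zero_or_eq_one.mp hd with rfl | rfl
  · simp
  · rw [one_mul, Nat.sub_sub_self (Nat.div_le_self _ _), pow_succ, Nat.div_div_eq_div_mul]

/-- The ℓ-ODE₃ schema computes the log most significant part `⌊y / 2^{ℓ(x)}⌋`. -/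
theorem msp_via_ODE3 (y : ℕ) (f : ℕ → ℕ) (h0 : f 0 = y)
    (hrec : ∀ x, f (x + 1) = f x - (ell (x + 1) - ell x) * (f x - f x / 2)) :
    ∀ x, f x = y / 2 ^ ell x := by
  intro x
  induction x with
  | zero => simp [h0, ell]
  | succ n ih =>
    have hstep : ell (n + 1) - ell n ≤ 1 := by have := ell_succ_le_succ_ell n; omega
    rw [hrec n, ih, div_two_pow_sub_mul_ceil_half y _ _ hstep,
      Nat.add_sub_cancel' (ell_le_ell_succ n)]
end
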